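/- Let γ > 0, μ > 0, let α, α̃, c ∈ ℝ^g be vectors and β, β̃ ∈ ℝ be scalars, and set Δα = α − α̃, Δβ = β − β̃, f = α + β·1_g − c, and z̲ = ‖α̃ + β̃·1_g − c‖₂ − ‖Δα‖₂ − √g·|Δβ| − ‖[α̃ + β̃·1_g − c]_−‖₂ − ‖[Δα]_−‖₂ − √g·|min(Δβ, 0)|. If μγ < z̲, then the gradient block ∇ψ(f) = max(1 − μ/‖(1/γ)[f]_+‖₂, 0) · (1/γ)[f]_+ satisfies ∇ψ(f) ≠ 0. -/

import Mathlib

open scoped RealInnerProductSpace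

/-- Componentwise positive part `[x]₊ i = max (x i) 0`. -/
noncomputable def posPart {g : ℕ} (x : EuclideanSpace ℝ (Fin g)) : EuclideanSpace ℝ (Fin g) :=
  WithLp.toLp 2 (fun i => max (x i) 0)

/-- Componentwise negative part `[x]₋ i = min (x i) 0`. -/
noncomputable def negPart {g : ℕ} (x : EuclideanSpace ℝ (Fin g)) : EuclideanSpace ℝ (Fin g) :=
  WithLp.toLp 2 (fun i => min (x i) 0)

/-- The all-ones vector `1_g`. -/
noncomputable def ones (g : ℕ) : EuclideanSpace ℝ (Fin g) := WithLp.toLp 2 (fun _ => 1)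

lemma norm_le_of_abs_le {g : ℕ} (x y : EuclideanSpace ℝ (Fin g))
    (h : ∀ i, |x i| ≤ |y i|) : ‖x‖ ≤ ‖y‖ := by
  rw [EuclideanSpace.norm_eq, EuclideanSpace.norm_eq]
  apply Real.sqrt_le_sqrt
  apply Finset.sum_le_sum
  intro i _
  rw [Real.norm_eq_abs, Real.norm_eq_abs]
  exact pow_le_pow_left₀ (abs_nonneg _) (h i) 2

lemma pos_add_neg {g : ℕ} (x : EuclideanSpace ℝ (Fin g)) : posPart x + negPart x = x := by
  ext i
  show max (x i) 0 + min (x i) 0 = x i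
  simpa using max_add_min (x i) 0

lemma norm_ones (g : ℕ) : ‖ones g‖ = Real.sqrt g := by
  rw [EuclideanSpace.norm_eq]
  have : ∀ i : Fin g, ‖ones g i‖ ^ 2 = 1 := by intro i; simp [ones]
  rw [Finset.sum_congr rfl fun i _ => this i, Finset.sum_const, Finset.card_univ,
    Fintype.card_fin, nsmul_eq_mul, mul_one]

lemma norm_smul_ones (g : ℕ) (t : ℝ) : ‖t • ones g‖ = Real.sqrt g * |t| := by
  rw [norm_smul, norm_ones, Real.norm_eq_abs, mul_comm]

lemma negPart_smul_ones (g : ℕ) (t : ℝ) : negPart (t • ones g) = (min t 0) • ones g := by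
  ext i
  show min (t * 1) 0 = min t 0 * 1
  simp

lemma negPart_norm_add3 {g : ℕ} (u v w : EuclideanSpace ℝ (Fin g)) :
    ‖negPart (u + v + w)‖ ≤ ‖negPart u‖ + ‖negPart v‖ + ‖negPart w‖ := by
  calc ‖negPart (u + v + w)‖ ≤ ‖negPart u + negPart v + negPart w‖ := by
        apply norm_le_of_abs_le
        intro i
        have hu1 := min_le_left (u i) 0; have hv1 := min_le_left (v i) 0
        have hw1 := min_le_left (w i) 0
        have hu2 := min_le_right (u i) 0; have hv2 := min_le_right (v i) 0
        have hw2 := min_le_right (w i) 0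
        have h1 : min (u i) 0 + min (v i) 0 + min (w i) 0 ≤ min (u i + v i + w i) 0 :=
          le_min (by linarith) (by linarith)
        have h2 : min (u i + v i + w i) 0 ≤ 0 := min_le_right _ _
        have h3 : min (u i) 0 + min (v i) 0 + min (w i) 0 ≤ 0 := by linarith
        show |min ((u+v+w) i) 0| ≤ |min (u i) 0 + min (v i) 0 + min (w i) 0|
        have he : (u+v+w) i = u i + v i + w i := rfl
        rw [he, abs_of_nonpos h2, abs_of_nonpos h3]
        linarith
    _ ≤ ‖negPart u‖ + ‖negPart v‖ + ‖negPart w‖ := by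
        have h1 := norm_add_le (negPart u + negPart v) (negPart w)
        have h2 := norm_add_le (negPart u) (negPart v)
        linarith


/-- Lemma 5: if `μγ < z̲` then the gradient block is nonzero. -/
theorem grad_nonzero_of_lower_bound (g : ℕ) (γ μ : ℝ) (hγ : 0 < γ) (hμ : 0 < μ)
    (α αt c : EuclideanSpace ℝ (Fin g)) (β βt : ℝ)
    (f : EuclideanSpace ℝ (Fin g)) (hf : f = α + β • ones g - c)
    (zlow : ℝ)
    (hz : zlow = ‖αt + βt • ones g - c‖ - ‖α - αt‖ - Real.sqrt g * |β - βt| -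
        ‖negPart (αt + βt • ones g - c)‖ - ‖negPart (α - αt)‖ -
        Real.sqrt g * |min (β - βt) 0|)
    (h : μ * γ < zlow) :
    (max (1 - μ / ‖(1 / γ) • posPart f‖) 0) • ((1 / γ) • posPart f) ≠ 0 := by
  set u := αt + βt • ones g - c with hu
  set v := α - αt with hv
  set w := (β - βt) • ones g with hw
  have hfuvw : f = u + v + w := by
    rw [hf, hu, hv, hw]
    module
  -- ‖f‖ ≥ ‖u‖ - ‖v‖ - ‖w‖
  have hfl : ‖u‖ - ‖v‖ - ‖w‖ ≤ ‖f‖ := by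
    have h1 := norm_add_le (u + v) w
    have h2 := norm_add_le u v
    have h3 : ‖u‖ ≤ ‖u + v + w‖ + ‖v‖ + ‖w‖ := by
      have := norm_sub_norm_le (u + v + w) (v + w)
      have h4 := norm_add_le v w
      have : ‖u + v + w‖ - ‖v + w‖ ≤ ‖u‖ → True := fun _ => trivial
      have h5 : u = (u + v + w) - (v + w) := by abel
      calc ‖u‖ = ‖(u + v + w) - (v + w)‖ := by rw [← h5]
        _ ≤ ‖u + v + w‖ + ‖v + w‖ := norm_sub_le _ _
        _ ≤ ‖u + v + w‖ + (‖v‖ + ‖w‖) := by linarith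
        _ = ‖u + v + w‖ + ‖v‖ + ‖w‖ := by ring
    rw [hfuvw]; linarith
  -- ‖negPart f‖ ≤ ...
  have hnf : ‖negPart f‖ ≤ ‖negPart u‖ + ‖negPart v‖ + ‖negPart w‖ := by
    rw [hfuvw]; exact negPart_norm_add3 u v w
  -- ‖posPart f‖ ≥ ‖f‖ - ‖negPart f‖
  have hpf : ‖f‖ - ‖negPart f‖ ≤ ‖posPart f‖ := by
    have h5 : f = posPart f + negPart f := (pos_add_neg f).symm
    have := norm_add_le (posPart f) (negPart f)
    rw [h5]
    rw [← h5] at this ⊢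
    linarith [this]
  have hwnorm : ‖w‖ = Real.sqrt g * |β - βt| := norm_smul_ones g (β - βt)
  have hnw : ‖negPart w‖ = Real.sqrt g * |min (β - βt) 0| := by
    rw [hw, negPart_smul_ones, norm_smul_ones]
  have hzle : zlow ≤ ‖posPart f‖ := by
    rw [hz]
    linarith
  have hppos : μ * γ < ‖posPart f‖ := lt_of_lt_of_le h hzle
  have hppos' : 0 < ‖posPart f‖ := lt_trans (by positivity) hppos
  set N := ‖(1 / γ) • posPart f‖ with hN
  have hNval : N = (1 / γ) * ‖posPart f‖ := by
    rw [hN, norm_smul, Real.norm_eq_abs, abs_of_pos (by positivity)]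
  have hNpos : 0 < N := by rw [hNval]; positivity
  have hμN : μ < N := by
    rw [hNval, one_div, ← div_eq_inv_mul]
    exact (lt_div_iff₀ hγ).mpr hppos
  have hcoef : 0 < max (1 - μ / N) 0 := by
    apply lt_max_of_lt_left
    have : μ / N < 1 := (div_lt_one hNpos).mpr hμN
    linarith
  intro hcontra
  rcases smul_eq_zero.mp hcontra with h0 | h0
  · exact absurd h0 (ne_of_gt hcoef)
  · have : N = 0 := by rw [hN, h0, norm_zero]
    exact absurd this (ne_of_gt hNpos)
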